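/- Let Ω ⊆ ℝ^N have finite positive measure, let u ∈ L^∞(Ω) with ‖u‖_∞ = 1, and let (p_n) satisfy p_n⁻ → ∞ and p_n⁺ ≤ β p_n⁻ for some β > 1. Then lim_{n→∞} (∫_Ω |u(x)|^{p_n(x)} dx)^{1/p_n⁺} = 1 and lim_{n→∞} (∫_Ω |u(x)|^{p_n(x)} dx)^{1/p_n⁻} = 1. -/

import Mathlib

/-!
Write `I n = ∫ |u|^{p n}`. Since `|u| ≤ 1` a.e., `I n ≤ |Ω|`, so `(I n)^{1/q n} ≤ |Ω|^{1/q n} → 1`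
for any exponents `q n → ∞`. Conversely, for `0 < a < 1` the set `{a < |u|}` has positive measure
`m` because `‖u‖_∞ = 1`, and `I n ≥ a^{p_n⁺} m`. If `p_n⁺ ≤ β q n`, this gives
`(I n)^{1/q n} ≥ a^β m^{1/q n} → a^β`, and `a^β` is as close to `1` as we like. Both `q n = p_n⁺`
and `q n = p_n⁻` satisfy `p_n⁺ ≤ β q n` and `q n → ∞`.
-/

open MeasureTheory Filter Topology

lemma Filter.Tendsto.const_rpow_one_div {ι : Type*} {l : Filter ι} {m : ℝ} (hm : 0 < m)
    {q : ι → ℝ} (hq : Tendsto q l atTop) : Tendsto (fun n => m ^ (1 / q n)) l (𝓝 1) := by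
  have h := (Real.continuousAt_const_rpow hm.ne' (b := 0)).tendsto.comp
    ((tendsto_const_nhds (x := (1 : ℝ))).div_atTop hq)
  simpa only [Real.rpow_zero, Function.comp_def] using h

lemma Real.exists_lt_rpow_of_lt_one {c : ℝ} (hc : c < 1) (β : ℝ) :
    ∃ a : ℝ, c < a ^ β ∧ a ∈ Set.Ioo 0 1 := by
  have h : Tendsto (fun a : ℝ => a ^ β) (𝓝[<] 1) (𝓝 1) := by
    simpa only [Real.one_rpow] using
      (Real.continuousAt_rpow_const 1 β (.inl one_ne_zero)).tendsto.mono_left nhdsWithin_le_nhds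
  exact ((h.eventually_const_lt hc).and (Ioo_mem_nhdsLT zero_lt_one)).exists

lemma Real.rpow_mul_rpow_one_div_le {a m I S q β : ℝ} (ha : a ∈ Set.Ioo 0 1) (hm : 0 ≤ m)
    (hq : 0 < q) (hSq : S ≤ β * q) (hI : a ^ S * m ≤ I) :
    a ^ β * m ^ (1 / q) ≤ I ^ (1 / q) := by
  have hSq' : S / q ≤ β := (div_le_iff₀ hq).2 hSq
  calc a ^ β * m ^ (1 / q)
      ≤ a ^ (S / q) * m ^ (1 / q) := mul_le_mul_of_nonneg_right
        (Real.rpow_le_rpow_of_exponent_ge ha.1 ha.2.le hSq') (Real.rpow_nonneg hm _)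
    _ = (a ^ S * m) ^ (1 / q) := by
        rw [Real.mul_rpow (Real.rpow_nonneg ha.1.le _) hm, ← Real.rpow_mul ha.1.le, mul_one_div]
    _ ≤ I ^ (1 / q) :=
        Real.rpow_le_rpow (mul_nonneg (Real.rpow_nonneg ha.1.le _) hm) hI (by positivity)

lemma MeasureTheory.measure_lt_pos_of_lt_essSup {α β : Type*} [MeasurableSpace α]
    {μ : Measure α} [ConditionallyCompleteLinearOrder β] {f : α → β} {a : β}
    (hf : IsCoboundedUnder (· ≤ ·) (ae μ) f) (ha : a < essSup f μ) :
    0 < μ {x | a < f x} :=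
  pos_iff_ne_zero.2 (frequently_ae_iff.1 (frequently_lt_of_lt_limsup hf ha))

lemma MeasureTheory.MemLp.isBoundedUnder_abs_of_top {α : Type*} [MeasurableSpace α]
    {μ : Measure α} {u : α → ℝ} (hu : MemLp u ⊤ μ) :
    IsBoundedUnder (· ≤ ·) (ae μ) fun x => |u x| := by
  have hess : eLpNormEssSup u μ < ⊤ := by rw [← eLpNorm_exponent_top]; exact hu.2
  obtain ⟨C, hC⟩ := eLpNormEssSup_lt_top_iff_isBoundedUnder.1 hess
  refine ⟨C, eventually_map.2 ?_⟩
  filter_upwards [hC] with x hx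
  simpa only [← Real.norm_eq_abs, ← coe_nnnorm] using NNReal.coe_le_coe.2 hx

namespace MeasureTheory

variable {α : Type*} [MeasurableSpace α] {μ : Measure α} {f p : α → ℝ}

lemma integrable_rpow_of_le_one [IsFiniteMeasure μ] (hf : AEMeasurable f μ)
    (hp : AEMeasurable p μ) (hf0 : 0 ≤ᵐ[μ] f) (hf1 : f ≤ᵐ[μ] 1) (hp0 : 0 ≤ᵐ[μ] p) :
    Integrable (fun x => f x ^ p x) μ := by
  refine Integrable.of_bound (hf.pow hp).aestronglyMeasurable 1 ?_
  filter_upwards [hf0, hf1, hp0] with x hx0 hx1 hpx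
  rw [Real.norm_of_nonneg (Real.rpow_nonneg hx0 _)]
  exact Real.rpow_le_one hx0 hx1 hpx

lemma integral_rpow_le_measureReal_univ [IsFiniteMeasure μ] (hf0 : 0 ≤ᵐ[μ] f)
    (hf1 : f ≤ᵐ[μ] 1) (hp0 : 0 ≤ᵐ[μ] p) :
    ∫ x, f x ^ p x ∂μ ≤ μ.real Set.univ := by
  have hle : (fun x => f x ^ p x) ≤ᵐ[μ] fun _ => (1 : ℝ) := by
    filter_upwards [hf0, hf1, hp0] with x hx0 hx1 hpx
    exact Real.rpow_le_one hx0 hx1 hpx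
  calc ∫ x, f x ^ p x ∂μ
      ≤ ∫ _, (1 : ℝ) ∂μ := integral_mono_of_nonneg
        (by filter_upwards [hf0] with x hx using Real.rpow_nonneg hx _) (integrable_const 1) hle
    _ = μ.real Set.univ := by simp

lemma rpow_mul_measureReal_lt_le_integral_rpow [IsFiniteMeasure μ] {a S : ℝ}
    (ha : a ∈ Set.Ioo 0 1) (hf0 : 0 ≤ᵐ[μ] f) (hp0 : 0 ≤ᵐ[μ] p) (hpS : ∀ᵐ x ∂μ, p x ≤ S)
    (hint : Integrable (fun x => f x ^ p x) μ) :
    a ^ S * μ.real {x | a < f x} ≤ ∫ x, f x ^ p x ∂μ := by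
  have hsub : {x | a < f x} ≤ᵐ[μ] {x | a ^ S ≤ f x ^ p x} := by
    filter_upwards [hp0, hpS] with x hpx hxS hax
    calc a ^ S ≤ a ^ p x := Real.rpow_le_rpow_of_exponent_ge ha.1 ha.2.le hxS
      _ ≤ f x ^ p x := Real.rpow_le_rpow ha.1.le (le_of_lt hax) hpx
  calc a ^ S * μ.real {x | a < f x}
      ≤ a ^ S * μ.real {x | a ^ S ≤ f x ^ p x} := mul_le_mul_of_nonneg_left
        (ENNReal.toReal_mono (measure_ne_top _ _) (measure_mono_ae hsub))
        (Real.rpow_nonneg ha.1.le _)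
    _ ≤ ∫ x, f x ^ p x ∂μ :=
        mul_meas_ge_le_integral_of_nonneg
          (by filter_upwards [hf0] with x hx using Real.rpow_nonneg hx _) hint _

lemma tendsto_integral_rpow_one_div {ι : Type*} {l : Filter ι} [IsFiniteMeasure μ]
    {p : ι → α → ℝ} {S q : ι → ℝ} {β : ℝ} (hf : AEMeasurable f μ) (hf0 : 0 ≤ᵐ[μ] f)
    (hf1 : f ≤ᵐ[μ] 1) (hf_pos : ∀ a < 1, 0 < μ {x | a < f x})
    (hp : ∀ n, AEMeasurable (p n) μ) (hp0 : ∀ n, 0 ≤ᵐ[μ] p n)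
    (hpS : ∀ n, ∀ᵐ x ∂μ, p n x ≤ S n) (hq : Tendsto q l atTop)
    (hSq : ∀ᶠ n in l, S n ≤ β * q n) :
    Tendsto (fun n => (∫ x, f x ^ p n x ∂μ) ^ (1 / q n)) l (𝓝 1) := by
  have : NeZero μ := ⟨fun h => by simpa [h] using hf_pos 0 one_pos⟩
  refine tendsto_order.2 ⟨fun c hc => ?_, fun c hc => ?_⟩
  · obtain ⟨a, hca, ha⟩ := Real.exists_lt_rpow_of_lt_one hc β
    have hm : 0 < μ.real {x | a < f x} :=
      ENNReal.toReal_pos (hf_pos a ha.2).ne' (measure_ne_top _ _)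
    have hlim := (hq.const_rpow_one_div hm).const_mul (a ^ β)
    rw [mul_one] at hlim
    filter_upwards [hlim.eventually_const_lt hca, hq.eventually_gt_atTop 0, hSq]
      with n hc_lt hqn hSqn
    refine hc_lt.trans_le (Real.rpow_mul_rpow_one_div_le ha hm.le hqn hSqn ?_)
    exact rpow_mul_measureReal_lt_le_integral_rpow ha hf0 (hp0 n) (hpS n)
      (integrable_rpow_of_le_one hf (hp n) hf0 hf1 (hp0 n))
  · have hlim := hq.const_rpow_one_div (measureReal_univ_pos (μ := μ))
    filter_upwards [hlim.eventually_lt_const hc, hq.eventually_gt_atTop 0] with n hlt hqn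
    refine lt_of_le_of_lt (Real.rpow_le_rpow ?_ ?_ (by positivity)) hlt
    · exact integral_nonneg_of_ae
        (by filter_upwards [hf0] with x hx using Real.rpow_nonneg hx _)
    · exact integral_rpow_le_measureReal_univ hf0 hf1 (hp0 n)

end MeasureTheory

theorem stmt6_general {N : ℕ} (Ω : Set (Fin N → ℝ))
    (hΩpos : 0 < volume Ω) (hΩfin : volume Ω < ⊤)
    (p : ℕ → (Fin N → ℝ) → ℝ) (hpmeas : ∀ n, Measurable (p n))
    (hp1 : ∀ n, ∀ᵐ x ∂(volume.restrict Ω), 1 < p n x)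
    (hpB : ∀ n, ∃ B : ℝ, ∀ᵐ x ∂(volume.restrict Ω), p n x ≤ B)
    (β : ℝ) (hβ : 1 < β)
    (hpβ : ∀ n, essSup (p n) (volume.restrict Ω) ≤ β * essInf (p n) (volume.restrict Ω))
    (hdiv : Tendsto (fun n => essInf (p n) (volume.restrict Ω)) atTop atTop)
    (u : (Fin N → ℝ) → ℝ)
    (huB : MemLp u ⊤ (volume.restrict Ω))
    (hnorm : essSup (fun x => |u x|) (volume.restrict Ω) = 1) :
    Tendsto (fun n => (∫ x in Ω, |u x| ^ p n x) ^ (1 / essSup (p n) (volume.restrict Ω)))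
        atTop (nhds 1) ∧
    Tendsto (fun n => (∫ x in Ω, |u x| ^ p n x) ^ (1 / essInf (p n) (volume.restrict Ω)))
        atTop (nhds 1) := by
  set μ := volume.restrict Ω
  have : IsFiniteMeasure μ := ⟨by rwa [Measure.restrict_apply_univ]⟩
  have : NeZero (volume Ω) := ⟨hΩpos.ne'⟩
  have hu_cobdd : IsCoboundedUnder (· ≤ ·) (ae μ) fun x => |u x| :=
    isCoboundedUnder_le_of_eventually_le _ (.of_forall fun x => abs_nonneg (u x))
  have hu_le : (fun x => |u x|) ≤ᵐ[μ] 1 :=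
    (ae_le_essSup huB.isBoundedUnder_abs_of_top).mono fun x hx => hx.trans_eq hnorm
  have hu_pos : ∀ a < 1, 0 < μ {x | a < |u x|} :=
    fun a ha => measure_lt_pos_of_lt_essSup hu_cobdd (hnorm ▸ ha)
  have hp_bdd : ∀ n, IsBoundedUnder (· ≤ ·) (ae μ) (p n) := hpB
  have hinf_le_sup : ∀ n, essInf (p n) μ ≤ essSup (p n) μ := fun n =>
    liminf_le_limsup (hp_bdd n) ⟨1, (hp1 n).mono fun x hx => hx.le⟩
  have key : ∀ q : ℕ → ℝ, Tendsto q atTop atTop →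
      (∀ᶠ n in atTop, essSup (p n) μ ≤ β * q n) →
      Tendsto (fun n => (∫ x, |u x| ^ p n x ∂μ) ^ (1 / q n)) atTop (nhds 1) :=
    fun _ hq hSq => tendsto_integral_rpow_one_div huB.1.aemeasurable.abs
      (.of_forall fun x => abs_nonneg (u x)) hu_le hu_pos (fun n => (hpmeas n).aemeasurable)
      (fun n => (hp1 n).mono fun x hx => zero_le_one.trans hx.le)
      (fun n => ae_le_essSup (hp_bdd n)) hq hSq
  refine ⟨key _ (tendsto_atTop_mono hinf_le_sup hdiv) ?_, key _ hdiv (.of_forall hpβ)⟩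
  filter_upwards [hdiv.eventually_ge_atTop 0] with n hn
  nlinarith [hinf_le_sup n]

/-- if `‖u‖_∞ = 1`, `p_n⁻ → ∞` and `p_n⁺ ≤ β p_n⁻`, then the modulars
raised to the powers `1/p_n⁺` and `1/p_n⁻` both tend to `1`. -/
theorem stmt6 {N : ℕ} (Ω : Set (Fin N → ℝ)) (hΩm : MeasurableSet Ω)
    (hΩpos : 0 < volume Ω) (hΩfin : volume Ω < ⊤)
    (p : ℕ → (Fin N → ℝ) → ℝ) (hpmeas : ∀ n, Measurable (p n))
    (hp1 : ∀ n, ∀ᵐ x ∂(volume.restrict Ω), 1 < p n x)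
    (hpB : ∀ n, ∃ B : ℝ, ∀ᵐ x ∂(volume.restrict Ω), p n x ≤ B)
    (β : ℝ) (hβ : 1 < β)
    (hpβ : ∀ n, essSup (p n) (volume.restrict Ω) ≤ β * essInf (p n) (volume.restrict Ω))
    (hdiv : Tendsto (fun n => essInf (p n) (volume.restrict Ω)) atTop atTop)
    (u : (Fin N → ℝ) → ℝ) (hu : Measurable u)
    (huB : MemLp u ⊤ (volume.restrict Ω))
    (hnorm : essSup (fun x => |u x|) (volume.restrict Ω) = 1) :
    Tendsto (fun n => (∫ x in Ω, |u x| ^ p n x) ^ (1 / essSup (p n) (volume.restrict Ω)))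
        atTop (nhds 1) ∧
    Tendsto (fun n => (∫ x in Ω, |u x| ^ p n x) ^ (1 / essInf (p n) (volume.restrict Ω)))
        atTop (nhds 1) :=
  stmt6_general Ω hΩpos hΩfin p hpmeas hp1 hpB β hβ hpβ hdiv u huB hnorm
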